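/- (Sufficient decrease lemma.) Let W be a symmetric real N×N matrix, ρ ∈ ℝ, set F(X;ρ) = Tr(X (W − (ρ/2)I) Xᵀ) + Nρ/2 and L = ‖2W − ρI‖_F, and let 0 < t < 1/(L+1). Let X ∈ Δ_k^N have all entries strictly positive and suppose X⁺ ∈ Δ_k^N has all entries strictly positive and minimizes Y ↦ ⟨X(2W − ρI), Y⟩ + (1/t) KL(Y, X) over Δ_k^N, where ⟨A, B⟩ = Tr(AᵀB). Then F(X⁺;ρ) ≤ F(X;ρ) − (1/t − L) · KL(X⁺, X). -/

import Mathlib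

/-!
Write `D = X⁺ - X` and `B = W - (ρ/2)I`, so that `B` is symmetric and `2B = 2W - ρI`. Then
`F(X⁺) - F(X) = ⟨X(2B), D⟩ + Tr(D B Dᵀ)`. Testing the minimality of `X⁺` against the competitor
`Y = X` bounds the linear term by `-KL(X⁺, X)/t`. By Cauchy–Schwarz and submultiplicativity of the
Frobenius norm, `2 Tr(D B Dᵀ) ≤ ‖2B‖_F ‖D‖_F²`, and `‖D‖_F² ≤ 2 KL(X⁺, X)` follows by summing the
entrywise bound `x - y + (x - y)²/2 ≤ x log(x/y)` on `[0, 1]`, the linear terms cancelling because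
the columns of `X⁺` and `X` have the same mass. The entrywise bound is the tangent-line inequality
at `y` for `x log x - x²/2`, which is convex on `[0, 1]`.
-/

open Matrix Real Set
open scoped Matrix.Norms.Frobenius

theorem ConvexOn.add_mul_sub_le_of_hasDerivAt {S : Set ℝ} {f : ℝ → ℝ} {f' x y : ℝ}
    (hf : ConvexOn ℝ S f) (hx : x ∈ S) (hy : y ∈ S) (hf' : HasDerivAt f f' y) :
    f y + f' * (x - y) ≤ f x := by
  rcases lt_trichotomy x y with hxy | rfl | hxy
  · have h := hf.slope_le_of_hasDerivAt hx hy hxy hf'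
    rw [slope_def_field, div_le_iff₀ (sub_pos.2 hxy)] at h
    linarith
  · simp
  · have h := hf.le_slope_of_hasDerivAt hy hx hxy hf'
    rw [slope_def_field, le_div_iff₀ (sub_pos.2 hxy)] at h
    linarith

theorem hasDerivAt_mul_log_sub_sq_div_two {x : ℝ} (hx : x ≠ 0) :
    HasDerivAt (fun x => x * log x - x ^ 2 / 2) (log x + 1 - x) x :=
  ((hasDerivAt_mul_log hx).sub ((hasDerivAt_pow 2 x).div_const 2)).congr_deriv (by norm_num)

theorem monotoneOn_log_sub_self : MonotoneOn (fun x => log x - x) (Ioc 0 1) := by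
  rintro a ⟨ha, -⟩ b ⟨-, hb⟩ hab
  have hb0 : 0 < b := ha.trans_le hab
  have h := log_le_sub_one_of_pos (div_pos ha hb0)
  have hslope : (a - b) / b ≤ a - b := by
    rw [div_le_iff₀ hb0]; nlinarith
  rw [log_div ha.ne' hb0.ne', div_sub_one hb0.ne'] at h
  linarith

theorem convexOn_mul_log_sub_sq_div_two :
    ConvexOn ℝ (Icc 0 1) fun x : ℝ => x * log x - x ^ 2 / 2 := by
  have hderiv : ∀ x ∈ Ioo (0 : ℝ) 1,
      HasDerivAt (fun x => x * log x - x ^ 2 / 2) (log x + 1 - x) x :=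
    fun x hx => hasDerivAt_mul_log_sub_sq_div_two hx.1.ne'
  refine MonotoneOn.convexOn_of_deriv (convex_Icc 0 1) (by fun_prop) ?_ ?_
  · rw [interior_Icc]
    exact fun x hx => (hderiv x hx).differentiableAt.differentiableWithinAt
  · rw [interior_Icc]
    intro a ha b hb hab
    rw [(hderiv a ha).deriv, (hderiv b hb).deriv]
    linarith [monotoneOn_log_sub_self ⟨ha.1, ha.2.le⟩ ⟨hb.1, hb.2.le⟩ hab]

theorem sub_add_sq_div_two_le_mul_log_div {x y : ℝ} (hx0 : 0 ≤ x) (hx1 : x ≤ 1) (hy0 : 0 < y)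
    (hy1 : y ≤ 1) : x - y + (x - y) ^ 2 / 2 ≤ x * log (x / y) := by
  have h := convexOn_mul_log_sub_sq_div_two.add_mul_sub_le_of_hasDerivAt ⟨hx0, hx1⟩
    ⟨hy0.le, hy1⟩ (hasDerivAt_mul_log_sub_sq_div_two hy0.ne')
  have hlog : x * log (x / y) = x * log x - x * log y := by
    rcases eq_or_ne x 0 with rfl | hx
    · simp
    · rw [log_div hx hy0.ne']; ring
  rw [hlog]
  linarith

namespace Matrix

variable {m n : Type*} [Fintype m] [Fintype n]

theorem trace_mul_transpose_eq_sum {α : Type*} [NonUnitalNonAssocSemiring α] (M N : Matrix m n α) :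
    trace (M * Nᵀ) = ∑ i, ∑ j, M i j * N i j := by
  simp [trace, mul_apply]

theorem trace_add_mul_mul_transpose_add {α : Type*} [CommSemiring α] {B : Matrix n n α}
    (hB : B.IsSymm) (X D : Matrix m n α) :
    trace ((X + D) * B * (X + D)ᵀ)
      = trace (X * B * Xᵀ) + 2 * trace (X * B * Dᵀ) + trace (D * B * Dᵀ) := by
  have hcross : trace (D * B * Xᵀ) = trace (X * B * Dᵀ) := by
    rw [← trace_transpose, transpose_mul, transpose_mul, transpose_transpose, hB.eq,
      Matrix.mul_assoc]
  simp only [Matrix.add_mul, Matrix.mul_add, transpose_add, trace_add, hcross]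
  ring

theorem frobenius_norm_eq_sqrt (A : Matrix m n ℝ) : ‖A‖ = √(∑ i, ∑ j, A i j ^ 2) := by
  simp [frobenius_norm_def, sqrt_eq_rpow]

theorem sum_mul_le_frobenius_norm_mul (M N : Matrix m n ℝ) :
    ∑ i, ∑ j, M i j * N i j ≤ ‖M‖ * ‖N‖ := by
  let toL2 : Matrix m n ℝ → PiLp 2 fun _ : m => EuclideanSpace ℝ n :=
    fun A => WithLp.toLp 2 fun i => WithLp.toLp 2 (A i)
  have h := real_inner_le_norm (toL2 N) (toL2 M)
  simp only [toL2, PiLp.inner_apply, RCLike.inner_apply, conj_trivial] at h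
  rw [mul_comm ‖M‖]
  exact h

theorem trace_mul_mul_transpose_le (A : Matrix n n ℝ) (D : Matrix m n ℝ) :
    trace (D * A * Dᵀ) ≤ ‖A‖ * ‖D‖ ^ 2 :=
  calc trace (D * A * Dᵀ) = ∑ i, ∑ j, (D * A) i j * D i j := trace_mul_transpose_eq_sum _ _
    _ ≤ ‖D * A‖ * ‖D‖ := sum_mul_le_frobenius_norm_mul _ _
    _ ≤ ‖D‖ * ‖A‖ * ‖D‖ := by gcongr; exact frobenius_norm_mul D A
    _ = ‖A‖ * ‖D‖ ^ 2 := by ring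

noncomputable def klDiv (Y X : Matrix m n ℝ) : ℝ :=
  ∑ i, ∑ j, Y i j * log (Y i j / X i j)

theorem klDiv_self (X : Matrix m n ℝ) : klDiv X X = 0 := by
  simp [klDiv]

theorem frobenius_norm_sub_sq_le_two_mul_klDiv {Y X : Matrix m n ℝ} (hY0 : ∀ i j, 0 ≤ Y i j)
    (hY : ∀ j, ∑ i, Y i j = 1) (hX0 : ∀ i j, 0 < X i j) (hX : ∀ j, ∑ i, X i j = 1) :
    ‖Y - X‖ ^ 2 ≤ 2 * klDiv Y X := by
  have le_one : ∀ {Z : Matrix m n ℝ}, (∀ i j, 0 ≤ Z i j) → (∀ j, ∑ i, Z i j = 1) →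
      ∀ i j, Z i j ≤ 1 := fun hZ0 hZ i j =>
    hZ j ▸ Finset.single_le_sum (fun l _ => hZ0 l j) (Finset.mem_univ i)
  have hmass : ∑ i, ∑ j, (Y i j - X i j) = 0 := by
    rw [Finset.sum_comm]
    simp [Finset.sum_sub_distrib, hY, hX]
  have hpt : ∑ i, ∑ j, (Y i j - X i j + (Y i j - X i j) ^ 2 / 2) ≤ klDiv Y X :=
    Finset.sum_le_sum fun i _ => Finset.sum_le_sum fun j _ =>
      sub_add_sq_div_two_le_mul_log_div (hY0 i j) (le_one hY0 hY i j) (hX0 i j)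
        (le_one (fun i j => (hX0 i j).le) hX i j)
  have hnorm : ‖Y - X‖ ^ 2 = ∑ i, ∑ j, (Y i j - X i j) ^ 2 := by
    rw [frobenius_norm_eq_sqrt, sq_sqrt (by positivity)]
    rfl
  simp only [Finset.sum_add_distrib, ← Finset.sum_div, hmass] at hpt
  linarith

end Matrix

theorem sufficient_decrease_general (k N : ℕ) (W : Matrix (Fin N) (Fin N) ℝ)
    (hW : W.IsSymm) (ρ t : ℝ)
    (X : Matrix (Fin k) (Fin N) ℝ)
    (hXpos : ∀ i j, 0 < X i j) (hXcol : ∀ j, ∑ i, X i j = 1)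
    (Xp : Matrix (Fin k) (Fin N) ℝ)
    (hXppos : ∀ i j, 0 < Xp i j) (hXpcol : ∀ j, ∑ i, Xp i j = 1)
    (hmin : ∀ Y : Matrix (Fin k) (Fin N) ℝ,
      (∀ i j, 0 ≤ Y i j) → (∀ j, ∑ i, Y i j = 1) →
        (∑ i, ∑ j, (X * ((2 : ℝ) • W - ρ • (1 : Matrix (Fin N) (Fin N) ℝ))) i j
              * Xp i j)
            + (1 / t) * ∑ i, ∑ j, Xp i j * Real.log (Xp i j / X i j)
          ≤ (∑ i, ∑ j, (X * ((2 : ℝ) • W - ρ • (1 : Matrix (Fin N) (Fin N) ℝ))) i j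
              * Y i j)
            + (1 / t) * ∑ i, ∑ j, Y i j * Real.log (Y i j / X i j)) :
    Matrix.trace (Xp * (W - (ρ / 2) • 1) * Xpᵀ) + N * ρ / 2
      ≤ Matrix.trace (X * (W - (ρ / 2) • 1) * Xᵀ) + N * ρ / 2
        - (1 / t - Real.sqrt (∑ i, ∑ j,
            (((2 : ℝ) • W - ρ • (1 : Matrix (Fin N) (Fin N) ℝ)) i j) ^ 2))
          * ∑ i, ∑ j, Xp i j * Real.log (Xp i j / X i j) := by
  set B := W - (ρ / 2) • (1 : Matrix (Fin N) (Fin N) ℝ)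
  set A := (2 : ℝ) • W - ρ • (1 : Matrix (Fin N) (Fin N) ℝ)
  have hA : A = (2 : ℝ) • B := by
    simp only [A, B]
    module
  have hB : B.IsSymm := hW.sub (isSymm_one.smul _)
  have hstep := hmin X (fun i j => (hXpos i j).le) hXcol
  change _ + 1 / t * klDiv Xp X ≤ _ + 1 / t * klDiv X X at hstep
  change _ ≤ _ - (1 / t - √(∑ i, ∑ j, A i j ^ 2)) * klDiv Xp X
  rw [klDiv_self] at hstep
  rw [← frobenius_norm_eq_sqrt]
  have hexpand := trace_add_mul_mul_transpose_add hB X (Xp - X)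
  rw [add_sub_cancel] at hexpand
  have hscale : ∀ M M' : Matrix (Fin k) (Fin N) ℝ,
      2 * trace (M * B * M'ᵀ) = trace (M * A * M'ᵀ) :=
    fun M M' => by rw [hA, Matrix.mul_smul, smul_mul, trace_smul, smul_eq_mul]
  have hlinear : trace (X * A * (Xp - X)ᵀ)
      = ∑ i, ∑ j, (X * A) i j * Xp i j - ∑ i, ∑ j, (X * A) i j * X i j := by
    simp only [trace_mul_transpose_eq_sum, Matrix.sub_apply, mul_sub, Finset.sum_sub_distrib]
  have hquad : trace ((Xp - X) * A * (Xp - X)ᵀ) ≤ ‖A‖ * (2 * klDiv Xp X) :=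
    calc trace ((Xp - X) * A * (Xp - X)ᵀ) ≤ ‖A‖ * ‖Xp - X‖ ^ 2 :=
          trace_mul_mul_transpose_le A (Xp - X)
      _ ≤ ‖A‖ * (2 * klDiv Xp X) := by
          gcongr
          exact frobenius_norm_sub_sq_le_two_mul_klDiv (fun i j => (hXppos i j).le) hXpcol
            hXpos hXcol
  linarith [hscale X (Xp - X), hscale (Xp - X) (Xp - X)]

/-- **Sufficient decrease lemma.** Let `W` be a symmetric real `N×N` matrix, `ρ ∈ ℝ`,
`F(X;ρ) = Tr(X (W − (ρ/2)I) Xᵀ) + Nρ/2`, `L = ‖2W − ρI‖_F`, and `0 < t < 1/(L+1)`.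
Let `X ∈ Δ_k^N` be entrywise strictly positive, and suppose `X⁺ ∈ Δ_k^N` is entrywise
strictly positive and minimizes `Y ↦ ⟨X(2W − ρI), Y⟩ + (1/t) KL(Y, X)` over `Δ_k^N`.
Then `F(X⁺;ρ) ≤ F(X;ρ) − (1/t − L) · KL(X⁺, X)`. -/
theorem sufficient_decrease (k N : ℕ) (W : Matrix (Fin N) (Fin N) ℝ)
    (hW : W.IsSymm) (ρ t : ℝ) (ht0 : 0 < t)
    (ht1 : t < 1 / (Real.sqrt (∑ i, ∑ j,
        (((2 : ℝ) • W - ρ • (1 : Matrix (Fin N) (Fin N) ℝ)) i j) ^ 2) + 1))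
    (X : Matrix (Fin k) (Fin N) ℝ)
    (hXpos : ∀ i j, 0 < X i j) (hXcol : ∀ j, ∑ i, X i j = 1)
    (Xp : Matrix (Fin k) (Fin N) ℝ)
    (hXppos : ∀ i j, 0 < Xp i j) (hXpcol : ∀ j, ∑ i, Xp i j = 1)
    (hmin : ∀ Y : Matrix (Fin k) (Fin N) ℝ,
      (∀ i j, 0 ≤ Y i j) → (∀ j, ∑ i, Y i j = 1) →
        (∑ i, ∑ j, (X * ((2 : ℝ) • W - ρ • (1 : Matrix (Fin N) (Fin N) ℝ))) i j
              * Xp i j)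
            + (1 / t) * ∑ i, ∑ j, Xp i j * Real.log (Xp i j / X i j)
          ≤ (∑ i, ∑ j, (X * ((2 : ℝ) • W - ρ • (1 : Matrix (Fin N) (Fin N) ℝ))) i j
              * Y i j)
            + (1 / t) * ∑ i, ∑ j, Y i j * Real.log (Y i j / X i j)) :
    Matrix.trace (Xp * (W - (ρ / 2) • 1) * Xpᵀ) + N * ρ / 2
      ≤ Matrix.trace (X * (W - (ρ / 2) • 1) * Xᵀ) + N * ρ / 2
        - (1 / t - Real.sqrt (∑ i, ∑ j,
            (((2 : ℝ) • W - ρ • (1 : Matrix (Fin N) (Fin N) ℝ)) i j) ^ 2))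
          * ∑ i, ∑ j, Xp i j * Real.log (Xp i j / X i j) :=
  sufficient_decrease_general k N W hW ρ t X hXpos hXcol Xp hXppos hXpcol hmin
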